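/- The function f(r) = √(√(1−r²)) · K(r) = (1−r²)^{1/4} K(r) is decreasing on [0,1), mapping [0,1) onto (0, π/2]. -/

import Mathlib

/-!
The substitutions `u = tan θ` and then `u = v / √r'` turn `√r' K(r)` into
`∫₀^∞ dv / √(1 + a v² + v⁴)` with `a = r' + 1/r'`. As `r` runs through `[0, 1)`, `a` increases
from `2` to `∞`, so the integrand decreases pointwise. For `a ≥ 2` it is dominated by
`1 / (1 + v²)`, because `1 + a v² + v⁴ ≥ (1 + v²)²`; dominated convergence then gives continuity
and the limit `0` as `r → 1`, and the range follows from `K(0) = π/2` and the intermediate value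
theorem.
-/

open Real Set Filter Topology

/-- Complete elliptic integral of the first kind. -/
noncomputable def ellK (r : ℝ) : ℝ :=
  ∫ θ in (0:ℝ)..(π / 2), 1 / Real.sqrt (1 - r ^ 2 * Real.sin θ ^ 2)

open MeasureTheory

lemma arctan_image_Ioi_zero : arctan '' Ioi 0 = Ioo 0 (π / 2) := by
  ext θ
  constructor
  · rintro ⟨u, hu, rfl⟩
    exact ⟨arctan_zero ▸ arctan_strictMono hu, arctan_lt_pi_div_two u⟩
  · rintro ⟨h0, h1⟩
    exact ⟨tan θ, tan_pos_of_pos_of_lt_pi_div_two h0 h1, arctan_tan (by linarith) h1⟩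

lemma ellK_eq_integral_Ioi (r : ℝ) :
    ellK r = ∫ u in Ioi (0:ℝ), 1 / √((1 + u ^ 2) * (1 + (1 - r ^ 2) * u ^ 2)) := by
  rw [ellK, intervalIntegral.integral_of_le (by positivity), integral_Ioc_eq_integral_Ioo,
    ← arctan_image_Ioi_zero,
    integral_image_eq_integral_abs_deriv_smul measurableSet_Ioi
      (fun u _ => (hasDerivAt_arctan u).hasDerivWithinAt) arctan_injective.injOn]
  refine setIntegral_congr_fun measurableSet_Ioi fun u _ => ?_
  have h : 0 < 1 + u ^ 2 := by positivity
  have hsq : √(1 + u ^ 2) ^ 2 = 1 + u ^ 2 := sq_sqrt h.le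
  rw [sin_arctan, div_pow, hsq, abs_of_pos (by positivity), smul_eq_mul,
    show 1 - r ^ 2 * (u ^ 2 / (1 + u ^ 2)) = (1 + (1 - r ^ 2) * u ^ 2) / (1 + u ^ 2) by
      field_simp; ring,
    sqrt_div' _ h.le, sqrt_mul h.le]
  field_simp
  rw [hsq]

noncomputable def quarticIntegral (a : ℝ) : ℝ :=
  ∫ v in Ioi (0 : ℝ), 1 / √(1 + a * v ^ 2 + v ^ 4)

lemma sqrt_mul_integral_Ioi_eq_quarticIntegral {t : ℝ} (ht : 0 < t) :
    √t * ∫ u in Ioi (0:ℝ), 1 / √((1 + u ^ 2) * (1 + t ^ 2 * u ^ 2)) =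
      quarticIntegral (t + t⁻¹) := by
  have hscale := integral_comp_mul_left_Ioi
    (fun u => 1 / √((1 + u ^ 2) * (1 + t ^ 2 * u ^ 2))) 0 (inv_pos.2 (sqrt_pos.2 ht))
  rw [mul_zero, inv_inv, smul_eq_mul] at hscale
  rw [← hscale, quarticIntegral]
  refine setIntegral_congr_fun measurableSet_Ioi fun v _ => ?_
  have h : (√t)⁻¹ ^ 2 = t⁻¹ := by rw [inv_pow, sq_sqrt ht.le]
  congr 2
  rw [mul_pow, h]
  field_simp
  ring

lemma one_add_sq_le_sqrt_quartic {a : ℝ} (ha : 2 ≤ a) (v : ℝ) :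
    1 + v ^ 2 ≤ √(1 + a * v ^ 2 + v ^ 4) :=
  le_sqrt_of_sq_le (by nlinarith [sq_nonneg v])

lemma sqrt_quartic_pos {a : ℝ} (ha : 2 ≤ a) (v : ℝ) : 0 < √(1 + a * v ^ 2 + v ^ 4) :=
  (by positivity : (0:ℝ) < 1 + v ^ 2).trans_le (one_add_sq_le_sqrt_quartic ha v)

lemma norm_one_div_sqrt_quartic_le {a : ℝ} (ha : 2 ≤ a) (v : ℝ) :
    ‖1 / √(1 + a * v ^ 2 + v ^ 4)‖ ≤ (1 + v ^ 2)⁻¹ := by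
  rw [norm_of_nonneg (by positivity), one_div]
  exact inv_anti₀ (by positivity) (one_add_sq_le_sqrt_quartic ha v)

lemma integrableOn_one_div_sqrt_quartic {a : ℝ} (ha : 2 ≤ a) :
    IntegrableOn (fun v : ℝ => 1 / √(1 + a * v ^ 2 + v ^ 4)) (Ioi 0) :=
  integrable_inv_one_add_sq.integrableOn.mono' (by fun_prop : Measurable _).aestronglyMeasurable
    (ae_of_all _ (norm_one_div_sqrt_quartic_le ha))

lemma antitoneOn_quarticIntegral : AntitoneOn quarticIntegral (Ici 2) := by
  intro a ha b hb hab
  refine setIntegral_mono (integrableOn_one_div_sqrt_quartic hb)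
    (integrableOn_one_div_sqrt_quartic ha) fun v => ?_
  have := sqrt_quartic_pos ha v
  gcongr

lemma continuousOn_quarticIntegral : ContinuousOn quarticIntegral (Ici 2) := by
  refine continuousOn_of_dominated (fun a _ => (by fun_prop : Measurable _).aestronglyMeasurable)
    (fun a ha => ae_of_all _ (norm_one_div_sqrt_quartic_le ha))
    integrable_inv_one_add_sq.integrableOn (ae_of_all _ fun v => ?_)
  exact continuousOn_const.div (by fun_prop) fun a ha => (sqrt_quartic_pos ha v).ne'

lemma tendsto_quarticIntegral_atTop : Tendsto quarticIntegral atTop (𝓝 0) := by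
  have hlim : ∀ v : ℝ, 0 < v → Tendsto (fun a => 1 / √(1 + a * v ^ 2 + v ^ 4)) atTop (𝓝 0) := by
    intro v hv
    simp only [one_div]
    refine tendsto_inv_atTop_zero.comp (tendsto_sqrt_atTop.comp ?_)
    exact tendsto_atTop_add_const_right _ _ (tendsto_atTop_add_const_left _ _
      (tendsto_id.atTop_mul_const (by positivity)))
  have := tendsto_integral_filter_of_dominated_convergence (f := fun _ => (0:ℝ)) _
    (Eventually.of_forall fun a => (by fun_prop : Measurable _).aestronglyMeasurable)
    ((eventually_ge_atTop 2).mono fun a ha => ae_of_all _ (norm_one_div_sqrt_quartic_le ha))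
    integrable_inv_one_add_sq.integrableOn
    ((ae_restrict_mem measurableSet_Ioi).mono hlim)
  rwa [integral_zero] at this

lemma quarticIntegral_pos {a : ℝ} (ha : 2 ≤ a) : 0 < quarticIntegral a := by
  rw [quarticIntegral, setIntegral_pos_iff_support_of_nonneg_ae (ae_of_all _ fun v => by positivity)
    (integrableOn_one_div_sqrt_quartic ha)]
  have hsupp : Function.support (fun v : ℝ => 1 / √(1 + a * v ^ 2 + v ^ 4)) = univ :=
    Function.support_eq_univ fun v => one_div_ne_zero (sqrt_quartic_pos ha v).ne'
  rw [hsupp, univ_inter, Real.volume_Ioi]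
  exact ENNReal.zero_lt_top

lemma two_le_add_inv {t : ℝ} (ht : 0 < t) : 2 ≤ t + t⁻¹ := by
  have := sq_nonneg (t - 1)
  rw [← sub_nonneg, show t + t⁻¹ - 2 = (t - 1) ^ 2 / t by field_simp; ring]
  positivity

lemma antitoneOn_add_inv : AntitoneOn (fun t : ℝ => t + t⁻¹) (Ioc 0 1) := by
  intro s ⟨hs0, hs1⟩ t ⟨ht0, ht1⟩ hst
  have : s * t ≤ 1 := by nlinarith
  rw [← sub_nonneg,
    show s + s⁻¹ - (t + t⁻¹) = (t - s) * (1 - s * t) / (s * t) by field_simp; ring]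
  have := sub_nonneg.2 hst
  positivity

lemma tendsto_add_inv_nhdsGT_zero : Tendsto (fun t : ℝ => t + t⁻¹) (𝓝[>] 0) atTop :=
  tendsto_atTop_mono' _ (eventually_nhdsWithin_of_forall fun t (ht : 0 < t) => by linarith)
    tendsto_inv_nhdsGT_zero

lemma antitoneOn_sqrt_one_sub_sq : AntitoneOn (fun r : ℝ => √(1 - r ^ 2)) (Ici 0) :=
  fun r hr s _ hrs => sqrt_le_sqrt (by nlinarith [mem_Ici.1 hr])

lemma mapsTo_sqrt_one_sub_sq : MapsTo (fun r : ℝ => √(1 - r ^ 2)) (Ico 0 1) (Ioc 0 1) :=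
  fun r ⟨h0, h1⟩ => ⟨sqrt_pos.2 (by nlinarith), sqrt_le_one.2 (by nlinarith)⟩

lemma tendsto_sqrt_one_sub_sq_nhdsLT_one :
    Tendsto (fun r : ℝ => √(1 - r ^ 2)) (𝓝[<] 1) (𝓝[>] 0) := by
  refine tendsto_nhdsWithin_iff.2 ⟨?_, ?_⟩
  · have : Tendsto (fun r : ℝ => √(1 - r ^ 2)) (𝓝 1) (𝓝 0) := by
      simpa using (by fun_prop : Continuous fun r : ℝ => √(1 - r ^ 2)).tendsto 1
    exact this.mono_left nhdsWithin_le_nhds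
  · filter_upwards [Ioo_mem_nhdsLT (show (0:ℝ) < 1 by norm_num)] with r hr
    exact (mapsTo_sqrt_one_sub_sq (Ioo_subset_Ico_self hr)).1

lemma sqrt_sqrt_mul_ellK_eq_quarticIntegral {r : ℝ} (hr : r ^ 2 < 1) :
    √(√(1 - r ^ 2)) * ellK r = quarticIntegral (√(1 - r ^ 2) + (√(1 - r ^ 2))⁻¹) := by
  rw [ellK_eq_integral_Ioi, ← sqrt_mul_integral_Ioi_eq_quarticIntegral (sqrt_pos.2 (by linarith)),
    sq_sqrt (by linarith)]

/-- `r ↦ (1−r²)^{1/4} K(r)` is decreasing on `[0,1)`, mapping `[0,1)` onto `(0, π/2]`. -/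
theorem antitoneOn_rt_rt_mul_ellK :
    AntitoneOn (fun r : ℝ => Real.sqrt (Real.sqrt (1 - r ^ 2)) * ellK r) (Ico 0 1) ∧
    (fun r : ℝ => Real.sqrt (Real.sqrt (1 - r ^ 2)) * ellK r) '' Ico 0 1 = Ioc 0 (π / 2) := by
  set f := fun r : ℝ => Real.sqrt (Real.sqrt (1 - r ^ 2)) * ellK r
  set k' := fun r : ℝ => √(1 - r ^ 2)
  set φ := (fun t : ℝ => t + t⁻¹) ∘ k'
  have hf : EqOn f (quarticIntegral ∘ φ) (Ico 0 1) := fun r hr =>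
    sqrt_sqrt_mul_ellK_eq_quarticIntegral (by nlinarith [hr.1, hr.2])
  have hφ_maps : MapsTo φ (Ico 0 1) (Ici 2) := fun r hr =>
    two_le_add_inv (mapsTo_sqrt_one_sub_sq hr).1
  have hφ_mono : MonotoneOn φ (Ico 0 1) := antitoneOn_add_inv.comp
    (antitoneOn_sqrt_one_sub_sq.mono Ico_subset_Ici_self) mapsTo_sqrt_one_sub_sq
  have hk'_cont : ContinuousOn k' (Ico 0 1) := by fun_prop
  have hφ_cont : ContinuousOn φ (Ico 0 1) :=
    hk'_cont.add (hk'_cont.inv₀ fun r hr => (mapsTo_sqrt_one_sub_sq hr).1.ne')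
  have hanti : AntitoneOn f (Ico 0 1) :=
    (antitoneOn_quarticIntegral.comp_MonotoneOn hφ_mono hφ_maps).congr hf.symm
  have hcont : ContinuousOn f (Ico 0 1) :=
    (continuousOn_quarticIntegral.comp hφ_cont hφ_maps).congr hf
  have hlim : Tendsto f (𝓝[<] 1) (𝓝 0) :=
    (tendsto_quarticIntegral_atTop.comp (tendsto_add_inv_nhdsGT_zero.comp
      tendsto_sqrt_one_sub_sq_nhdsLT_one)).congr'
      (eventuallyEq_of_mem (Ico_mem_nhdsLT one_pos) hf.symm)
  have h0 : f 0 = π / 2 := by simp [f, ellK]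
  refine ⟨hanti, Subset.antisymm ?_ ?_⟩
  · rintro _ ⟨r, hr, rfl⟩
    exact ⟨hf hr ▸ quarticIntegral_pos (hφ_maps hr), h0 ▸ hanti ⟨le_rfl, one_pos⟩ hr hr.1⟩
  · simpa [h0] using isPreconnected_Ico.intermediate_value_Ioc ⟨le_rfl, one_pos⟩
      (le_principal_iff.2 (Ico_mem_nhdsLT one_pos)) hcont hlim
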